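/- arXiv:1208.5992 — 3 statements merged into one kernel-verified Lean document; each statement's English description precedes it below -/
import Mathlib

section
/- There is an absolute constant C > 0 such that for all sufficiently large x and all y with log x ≤ y ≤ x^{1/3}, if α is the unique positive solution of ∑_{p ≤ y} (log p)/(p^α − 1) = log x and α' is the unique positive solution of ∑_{p ≤ y·(1+1/log x)} (log p)/(p^{α'} − 1) = log x, then |α' − α| ≤ C/(log x). -/
open scoped Classical

/-- `smoothCount x y` = Ψ(x,y), the number of `y`-smooth positive integers `n ≤ x`. -/
noncomputable def smoothCount (x y : ℝ) : ℕ :=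
  ((Finset.Icc 1 ⌊x⌋₊).filter fun n => ∀ p : ℕ, p.Prime → p ∣ n → (p : ℝ) ≤ y).card

/-- `smoothCountCoprime x y q` = Ψ_q(x,y), the number of `y`-smooth `n ≤ x` with `gcd(n,q) = 1`. -/
noncomputable def smoothCountCoprime (x y : ℝ) (q : ℕ) : ℕ :=
  ((Finset.Icc 1 ⌊x⌋₊).filter fun n =>
    (∀ p : ℕ, p.Prime → p ∣ n → (p : ℝ) ≤ y) ∧ Nat.gcd n q = 1).card

/-- `smoothCountAP x y q a` = Ψ(x,y;q,a), the number of `y`-smooth `n ≤ x` with `n ≡ a (mod q)`. -/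
noncomputable def smoothCountAP (x y : ℝ) (q a : ℕ) : ℕ :=
  ((Finset.Icc 1 ⌊x⌋₊).filter fun n =>
    (∀ p : ℕ, p.Prime → p ∣ n → (p : ℝ) ≤ y) ∧ (n : ZMod q) = (a : ZMod q)).card

/-- `smoothCharSum χ x y` = Ψ(x,y;χ) = ∑_{n ≤ x, n y-smooth} χ(n). -/
noncomputable def smoothCharSum {q : ℕ} (χ : DirichletCharacter ℂ q) (x y : ℝ) : ℂ :=
  ∑ n ∈ Finset.Icc 1 ⌊x⌋₊, if (∀ p : ℕ, p.Prime → p ∣ n → (p : ℝ) ≤ y) then χ n else 0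

/-!
Write `φ(y, s) = saddleSum y s = ∑_{p ≤ y} log p / (p ^ s - 1)`, decreasing in `s` and
increasing in `y`; hence `α ≤ α'`. Put `δ = α' - α`, `y' = y (1 + 1 / log x)` and
`w = y ^ (δ / 2)`. Both sides of `φ(y, α) - φ(y, α') = φ(y', α') - φ(y, α')` are estimated
against `1 / (y ^ α - 1)`:
* the right side has at most `y / log x + 1` terms, each
  `≤ log y' / (y ^ α' - 1) ≤ w⁻² log y' / (y ^ α - 1)`;
* on the left, each prime `p ∈ (√y, y]` gains the factor `1 - p ^ (-δ) ≥ 1 - w⁻¹`, and Chebyshev's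
  bound gives `∑_{√y < p ≤ y} log p ≥ y / 2` for large `y`.
Hence `w² - w ≪ log y / log x`, while `w² - w ≥ log w = δ log y / 2`.
-/

open Finset Real Chebyshev Filter Asymptotics

lemma sum_filter_prime_Icc_sub_eq {M : Type*} [AddCommGroup M] (f : ℕ → M) {m n : ℕ}
    (hmn : m ≤ n) :
    ∑ p ∈ (Icc 1 n).filter Nat.Prime, f p - ∑ p ∈ (Icc 1 m).filter Nat.Prime, f p =
      ∑ p ∈ (Ioc m n).filter Nat.Prime, f p := by
  have hIcc (k : ℕ) : Icc 1 k = Ioc 0 k := Icc_add_one_left_eq_Ioc 0 k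
  simp only [hIcc, sum_filter]
  rw [sub_eq_iff_eq_add', sum_Ioc_consecutive _ (Nat.zero_le m) hmn]

lemma theta_sub_theta_eq_sum {x y : ℝ} (hxy : x ≤ y) :
    θ y - θ x = ∑ p ∈ (Ioc ⌊x⌋₊ ⌊y⌋₊).filter Nat.Prime, log p := by
  simp only [theta, sum_filter]
  rw [sub_eq_iff_eq_add', sum_Ioc_consecutive _ (Nat.zero_le _) (Nat.floor_le_floor hxy)]

lemma isLittleO_sqrt_mul_log_id : (fun y => √y * log y) =o[atTop] id := by
  refine ((isBigO_refl sqrt atTop).mul_isLittleO (isLittleO_log_rpow_atTop one_half_pos)).congr'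
    EventuallyEq.rfl ?_
  filter_upwards [eventually_ge_atTop 0] with y hy
  rw [← sqrt_eq_rpow, mul_self_sqrt hy, id]

lemma eventually_half_le_theta_sub_theta_sqrt : ∀ᶠ y in atTop, y / 2 ≤ θ y - θ √y := by
  have hlog2 := log_two_gt_d9
  filter_upwards [isLittleO_sqrt_mul_log_id.bound (c := (log 2 - 1/2) / 6) (by linarith),
    eventually_ge_atTop 4] with y hbound hy
  rw [norm_of_nonneg (mul_nonneg (sqrt_nonneg y) (log_nonneg (by linarith))), id,
    norm_of_nonneg (by linarith)] at hbound
  have hθy := theta_ge' (x := y) (by linarith)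
  have hθsqrt := theta_le_log4_mul_x (sqrt_nonneg y)
  have hsqrt : 1 ≤ √y := one_le_sqrt.2 (by linarith)
  have hlog4 : log 4 ≤ log y := log_le_log (by norm_num) hy
  have hlog2y : log 2 ≤ log y := log_le_log (by norm_num) (by linarith)
  have hlogy2 : log (y + 2) ≤ 2 * log y := by
    rw [← log_rpow (by linarith)]; exact log_le_log (by linarith) (by norm_cast; nlinarith)
  nlinarith

lemma log_div_rpow_sub_one_strictAntiOn {p : ℝ} (hp : 1 < p) :
    StrictAntiOn (fun s : ℝ => log p / (p ^ s - 1)) (Set.Ioi 0) := by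
  intro s hs t _ hst
  rw [Set.mem_Ioi] at hs
  have hps : 1 < p ^ s := one_lt_rpow hp hs
  exact div_lt_div_of_pos_left (log_pos hp) (by linarith)
    (by linarith [rpow_lt_rpow_of_exponent_lt hp hst])

lemma one_sub_rpow_sub_mul_log_le {p y a b : ℝ} (hp : 1 < p) (hpy : p ≤ y) (ha : 0 < a)
    (hab : a ≤ b) :
    (1 - p ^ (a - b)) * log p ≤ (y ^ a - 1) * (log p / (p ^ a - 1) - log p / (p ^ b - 1)) := by
  have hpa : 1 < p ^ a := one_lt_rpow hp ha
  have hpb : p ^ a ≤ p ^ b := rpow_le_rpow_of_exponent_le hp.le hab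
  have hya : p ^ a ≤ y ^ a := rpow_le_rpow (by linarith) hpy ha.le
  have hlog : 0 ≤ log p := log_nonneg hp.le
  have hgap : 0 ≤ log p / (p ^ a - 1) - log p / (p ^ b - 1) :=
    sub_nonneg.2 (div_le_div_of_nonneg_left hlog (by linarith) (by linarith))
  calc (1 - p ^ (a - b)) * log p = log p * (p ^ b - p ^ a) / p ^ b := by
        rw [rpow_sub (by linarith)]; field_simp
    _ ≤ log p * (p ^ b - p ^ a) / (p ^ b - 1) := by
        gcongr
        · nlinarith
        · linarith
    _ = (p ^ a - 1) * (log p / (p ^ a - 1) - log p / (p ^ b - 1)) := by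
        field_simp [show p ^ a - 1 ≠ 0 by linarith, show p ^ b - 1 ≠ 0 by linarith]; ring
    _ ≤ (y ^ a - 1) * (log p / (p ^ a - 1) - log p / (p ^ b - 1)) := by gcongr

noncomputable def saddleSum (y s : ℝ) : ℝ :=
  ∑ p ∈ (Icc 1 ⌊y⌋₊).filter Nat.Prime, log p / ((p : ℝ) ^ s - 1)

lemma saddleSum_strictAntiOn {y : ℝ} (hy : 2 ≤ y) : StrictAntiOn (saddleSum y) (Set.Ioi 0) := by
  intro s hs t ht hst
  rw [Set.mem_Ioi] at hs ht
  refine sum_lt_sum (fun p hp => ?_) ⟨2, ?_, ?_⟩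
  · have hp1 : (1 : ℝ) < p := by exact_mod_cast (mem_filter.1 hp).2.one_lt
    exact ((log_div_rpow_sub_one_strictAntiOn hp1).le_iff_ge ht hs).2 hst.le
  · exact mem_filter.2 ⟨mem_Icc.2 ⟨one_le_two, Nat.le_floor (by exact_mod_cast hy)⟩, Nat.prime_two⟩
  · exact log_div_rpow_sub_one_strictAntiOn (by norm_num) (Set.mem_Ioi.2 hs) (Set.mem_Ioi.2 ht) hst

lemma saddleSum_sub_eq {z w : ℝ} (s : ℝ) (hzw : z ≤ w) :
    saddleSum w s - saddleSum z s =
      ∑ p ∈ (Ioc ⌊z⌋₊ ⌊w⌋₊).filter Nat.Prime, log p / ((p : ℝ) ^ s - 1) :=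
  sum_filter_prime_Icc_sub_eq _ (Nat.floor_le_floor hzw)

lemma saddleSum_monotone {s : ℝ} (hs : 0 < s) : Monotone (saddleSum · s) := by
  intro z w hzw
  rw [← sub_nonneg, saddleSum_sub_eq s hzw]
  refine sum_nonneg fun p hp => div_nonneg (log_natCast_nonneg p) ?_
  have hp1 : (1 : ℝ) < p := by exact_mod_cast (mem_filter.1 hp).2.one_lt
  linarith [one_lt_rpow hp1 hs]

lemma saddleSum_sub_le {z w s : ℝ} (hs : 0 < s) (hz : 1 < z) (hzw : z ≤ w) :
    saddleSum w s - saddleSum z s ≤ (w - z + 1) * (log w / (z ^ s - 1)) := by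
  have hzs : 1 < z ^ s := one_lt_rpow hz hs
  have hterm : ∀ p ∈ (Ioc ⌊z⌋₊ ⌊w⌋₊).filter Nat.Prime,
      log p / ((p : ℝ) ^ s - 1) ≤ log w / (z ^ s - 1) := by
    intro p hp
    obtain ⟨hzp, hpw⟩ := mem_Ioc.1 (mem_filter.1 hp).1
    have hzp : z < p := (Nat.floor_lt (by linarith)).1 hzp
    have hpw : (p : ℝ) ≤ w := (Nat.le_floor_iff (by linarith)).1 hpw
    have hps : z ^ s < (p : ℝ) ^ s := rpow_lt_rpow (by linarith) hzp hs
    exact div_le_div₀ (log_nonneg (by linarith)) (log_le_log (by linarith) hpw) (by linarith)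
      (by linarith)
  have hcard : (#((Ioc ⌊z⌋₊ ⌊w⌋₊).filter Nat.Prime) : ℝ) ≤ w - z + 1 := by
    have hle : #((Ioc ⌊z⌋₊ ⌊w⌋₊).filter Nat.Prime) ≤ ⌊w⌋₊ - ⌊z⌋₊ :=
      (card_filter_le _ _).trans (Nat.card_Ioc _ _).le
    have := Nat.floor_le (show 0 ≤ w by linarith)
    have := Nat.lt_floor_add_one z
    have hcast := (Nat.cast_le (α := ℝ)).2 hle
    rw [Nat.cast_sub (Nat.floor_le_floor hzw)] at hcast
    linarith
  rw [saddleSum_sub_eq s hzw]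
  calc _ ≤ #((Ioc ⌊z⌋₊ ⌊w⌋₊).filter Nat.Prime) • (log w / (z ^ s - 1)) :=
        sum_le_card_nsmul _ _ _ hterm
    _ ≤ (w - z + 1) * (log w / (z ^ s - 1)) := by
        rw [nsmul_eq_mul]
        exact mul_le_mul_of_nonneg_right hcard (div_nonneg (log_nonneg (by linarith)) (by linarith))

lemma one_sub_rpow_mul_theta_sub_le {y a b : ℝ} (hy : 1 ≤ y) (ha : 0 < a) (hab : a ≤ b) :
    (1 - y ^ ((a - b) / 2)) * (θ y - θ √y) ≤ (y ^ a - 1) * (saddleSum y a - saddleSum y b) := by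
  rw [theta_sub_theta_eq_sum (sqrt_le_left (by linarith) |>.2 (by nlinarith)), mul_sum,
    saddleSum, saddleSum, ← sum_sub_distrib, mul_sum]
  refine (sum_le_sum fun p hp => ?_).trans (sum_le_sum_of_subset_of_nonneg ?_ fun p hp _ => ?_)
  · obtain ⟨hp, hprime⟩ := mem_filter.1 hp
    have hsp : √y < p := (Nat.floor_lt (sqrt_nonneg y)).1 (mem_Ioc.1 hp).1
    have hpy : (p : ℝ) ≤ y := (Nat.le_floor_iff (by linarith)).1 (mem_Ioc.1 hp).2
    have hp1 : (1 : ℝ) < p := by exact_mod_cast hprime.one_lt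
    have hpow : (p : ℝ) ^ (a - b) ≤ y ^ ((a - b) / 2) := by
      rw [show (a - b) / 2 = 1 / 2 * (a - b) by ring, rpow_mul (by linarith), ← sqrt_eq_rpow]
      exact rpow_le_rpow_of_nonpos (sqrt_pos.2 (by linarith)) hsp.le (by linarith)
    calc (1 - y ^ ((a - b) / 2)) * log p ≤ (1 - (p : ℝ) ^ (a - b)) * log p := by
          gcongr
      _ ≤ _ := one_sub_rpow_sub_mul_log_le hp1 hpy ha hab
  · refine filter_subset_filter _ fun p hp => ?_
    rw [mem_Ioc] at hp
    exact mem_Icc.2 ⟨by omega, hp.2⟩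
  · have hp1 : (1 : ℝ) < p := by exact_mod_cast (mem_filter.1 hp).2.one_lt
    refine mul_nonneg (by linarith [one_le_rpow hy ha.le]) (sub_nonneg.2 ?_)
    exact ((log_div_rpow_sub_one_strictAntiOn hp1).le_iff_ge (lt_of_lt_of_le ha hab) ha).2 hab

lemma sub_mul_log_le_of_saddleSum_eq {y y' a b c : ℝ} (hy : 1 < y) (hyy' : y ≤ y') (hc : 0 ≤ c)
    (hθ : c * y ≤ θ y - θ √y) (ha : 0 < a) (hab : a ≤ b)
    (heq : saddleSum y a = saddleSum y' b) :
    (b - a) * log y * (c * y) ≤ 2 * ((y' - y + 1) * log y') := by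
  set w := y ^ ((b - a) / 2) with hw
  have hw1 : 1 ≤ w := one_le_rpow hy.le (by linarith)
  have hwinv : y ^ ((a - b) / 2) = w⁻¹ := by
    rw [hw, ← rpow_neg (by linarith)]; ring_nf
  have hyb : y ^ b = w ^ 2 * y ^ a := by
    rw [hw, ← rpow_natCast, ← rpow_mul (by linarith), ← rpow_add (by linarith)]; ring_nf
  have hlogw : (b - a) / 2 * log y ≤ w - 1 := by
    rw [← log_rpow (by linarith)]; exact log_le_sub_one_of_pos (by positivity)
  have hya : 1 < y ^ a := one_lt_rpow hy ha
  have hyb1 : 1 < y ^ b := one_lt_rpow hy (ha.trans_le hab)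
  have hcy : 0 ≤ c * y := by positivity
  have hwinv1 : 0 ≤ 1 - w⁻¹ := sub_nonneg.2 (inv_le_one_of_one_le₀ hw1)
  have hlower := one_sub_rpow_mul_theta_sub_le hy.le ha hab
  have hupper := saddleSum_sub_le (ha.trans_le hab) hy hyy'
  rw [← heq, mul_div_assoc', le_div_iff₀ (by linarith)] at hupper
  rw [hwinv] at hlower
  set D := saddleSum y a - saddleSum y b
  have hgap : (1 - w⁻¹) * (c * y) ≤ (y ^ a - 1) * D :=
    (mul_le_mul_of_nonneg_left hθ hwinv1).trans hlower
  have hD : 0 ≤ D := nonneg_of_mul_nonneg_right ((mul_nonneg hwinv1 hcy).trans hgap) (by linarith)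
  have hmain : (w ^ 2 - w) * (c * y) ≤ (y' - y + 1) * log y' := calc
    (w ^ 2 - w) * (c * y) = w ^ 2 * ((1 - w⁻¹) * (c * y)) := by field_simp
    _ ≤ w ^ 2 * ((y ^ a - 1) * D) := by gcongr
    _ ≤ (y ^ b - 1) * D := by
      rw [hyb]; nlinarith [mul_nonneg (sub_nonneg.2 (one_le_pow₀ hw1 : 1 ≤ w ^ 2)) hD]
    _ ≤ (y' - y + 1) * log y' := by linarith
  calc (b - a) * log y * (c * y) = 2 * ((b - a) / 2 * log y * (c * y)) := by ring
    _ ≤ 2 * ((w ^ 2 - w) * (c * y)) := by gcongr; nlinarith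
    _ ≤ 2 * ((y' - y + 1) * log y') := by gcongr

lemma sub_add_one_mul_log_mul_le {y L : ℝ} (hL : 2 ≤ L) (hLy : L ≤ y) :
    (y * (1 + 1 / L) - y + 1) * log (y * (1 + 1 / L)) * L ≤ 4 * (y * log y) := by
  have hyL : 1 ≤ y / L := (one_le_div (by linarith)).2 hLy
  have hyL' : y / L ≤ y := div_le_self (by linarith) (by linarith)
  have hlog : log (y + y / L) ≤ 2 * log y := by
    rw [← log_rpow (by linarith)]
    exact log_le_log (by linarith) (by norm_cast; nlinarith)
  rw [show y * (1 + 1 / L) = y + y / L by ring]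
  calc (y + y / L - y + 1) * log (y + y / L) * L ≤ 2 * (y / L) * (2 * log y) * L := by
        gcongr
        · exact log_nonneg (by linarith)
        · linarith
    _ = 4 * (y * log y) := by field_simp; ring

/-- **Stability of the saddle point under small changes of `y`.**
There is `C > 0` such that for all sufficiently large `x` and all `log x ≤ y ≤ x^{1/3}`,
if `α, α' > 0` satisfy `∑_{p ≤ y} log p/(p^α − 1) = log x` and
`∑_{p ≤ y(1+1/log x)} log p/(p^{α'} − 1) = log x`, then `|α' − α| ≤ C/log x`. -/
theorem saddle_point_stability :
    ∃ C : ℝ, 0 < C ∧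
      ∃ x₀ : ℝ, ∀ x y α α' : ℝ,
        x₀ ≤ x → Real.log x ≤ y → y ≤ x ^ ((1 : ℝ) / 3) →
        0 < α → 0 < α' →
        (∑ p ∈ (Finset.Icc 1 ⌊y⌋₊).filter Nat.Prime,
            Real.log p / ((p : ℝ) ^ α - 1)) = Real.log x →
        (∑ p ∈ (Finset.Icc 1 ⌊y * (1 + 1 / Real.log x)⌋₊).filter Nat.Prime,
            Real.log p / ((p : ℝ) ^ α' - 1)) = Real.log x →
        |α' - α| ≤ C / Real.log x := by
  obtain ⟨Y, hY⟩ := eventually_atTop.1 eventually_half_le_theta_sub_theta_sqrt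
  refine ⟨16, by norm_num, exp (max Y 2), fun x y α α' hx hLy _ hα hα' hF hF' => ?_⟩
  change saddleSum y α = log x at hF
  change saddleSum (y * (1 + 1 / log x)) α' = log x at hF'
  have hL : max Y 2 ≤ log x := (le_log_iff_exp_le ((exp_pos _).trans_le hx)).2 hx
  have hL2 : 2 ≤ log x := le_of_max_le_right hL
  have hyy' : y ≤ y * (1 + 1 / log x) :=
    le_mul_of_one_le_right (by linarith) (by simp only [le_add_iff_nonneg_right]; positivity)
  have hαα' : α ≤ α' := ((saddleSum_strictAntiOn (hL2.trans hLy)).le_iff_ge hα' hα).1 <| by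
    rw [hF, ← hF']; exact saddleSum_monotone hα' hyy'
  have hkey := sub_mul_log_le_of_saddleSum_eq (c := 1 / 2) (by linarith) hyy' (by norm_num)
    (by linarith [hY y ((le_of_max_le_left hL).trans hLy)]) hα hαα' (hF.trans hF'.symm)
  have htail := sub_add_one_mul_log_mul_le hL2 hLy
  have hylog : 0 < y * log y := mul_pos (by linarith) (log_pos (by linarith))
  rw [abs_of_nonneg (sub_nonneg.2 hαα'), le_div_iff₀ (by linarith)]
  refine le_of_mul_le_mul_right ?_ hylog
  nlinarith
end

section
/- There is an absolute constant C > 0 such that for all sufficiently large x and all y with log x ≤ y ≤ x, one has Ψ(x, y·(1 + 1/log x)) ≤ C·Ψ(x,y). -/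
open scoped Classical

/-
Write `Ψ_s(N)` for the number of `n ≤ N` whose prime factors all lie in `s`. Splitting off the
power of a prime `p` gives `Ψ_{s ∪ {p}}(N) ≤ ∑_{k ≥ 0} Ψ_s(N / p^k)`. For `k ≥ 1` and a prime
`q ≤ p` of `s`, `Ψ_s(N / p^k) ≤ Ψ_s(N / q^k) ≤ #{n counted by Ψ_s(N) : q^k ∣ n}`; averaging over
all primes `q ≤ y` with weight `log q`, and using `∑_{q^k ∣ n} log q ≤ log n ≤ log N`, each prime
`p ∈ (y, z]` multiplies the count by at most `1 + log x / θ(y)`. There are at most `z - y + 1`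
such primes, so `Ψ(x, z) ≤ exp ((z - y + 1) log x / θ(y)) Ψ(x, y)`. For `z = y (1 + 1 / log x)`
and `y ≥ log x` the exponent is at most `2y / θ(y)`, which Chebyshev's bound `θ(y) ≫ y` controls.
-/

open Finset Real Filter Chebyshev

noncomputable def factoredCount (s : Finset ℕ) (N : ℕ) : ℕ :=
  #{n ∈ Icc 1 N | n ∈ Nat.factoredNumbers s}

lemma factoredCount_mono {s : Finset ℕ} {M N : ℕ} (h : M ≤ N) :
    factoredCount s M ≤ factoredCount s N :=
  card_le_card <| filter_subset_filter _ <| Icc_subset_Icc_right h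

lemma factoredCount_div_le {s : Finset ℕ} {d : ℕ} (hd : d ∈ Nat.factoredNumbers s) (N : ℕ) :
    factoredCount s (N / d) ≤ #{n ∈ Icc 1 N | n ∈ Nat.factoredNumbers s ∧ d ∣ n} := by
  have hd0 : 0 < d := Nat.pos_of_ne_zero hd.1
  refine card_le_card_of_injOn (d * ·) (fun m hm ↦ ?_)
    fun a _ b _ h ↦ Nat.eq_of_mul_eq_mul_left hd0 h
  simp only [coe_filter, mem_Icc, Set.mem_ofPred_eq] at hm ⊢
  refine ⟨⟨Nat.mul_pos hd0 hm.1.1, ?_⟩, Nat.mul_mem_factoredNumbers hd hm.2, dvd_mul_right d m⟩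
  rw [mul_comm]
  exact (Nat.le_div_iff_mul_le hd0).1 hm.1.2

lemma card_filter_pow_dvd_le_factorization {q n : ℕ} (hq : q.Prime) (hn : n ≠ 0) (K : ℕ) :
    #{k ∈ Ioc 0 K | q ^ k ∣ n} ≤ n.factorization q := by
  calc #{k ∈ Ioc 0 K | q ^ k ∣ n} ≤ #(Ioc 0 (n.factorization q)) := by
        refine card_le_card fun k hk ↦ ?_
        simp only [mem_filter, mem_Ioc] at hk ⊢
        exact ⟨hk.1.1, (hq.pow_dvd_iff_le_factorization hn).1 hk.2⟩
    _ = n.factorization q := by simp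

lemma sum_factorization_mul_log_le_log (Q : Finset ℕ) (n : ℕ) :
    ∑ q ∈ Q, n.factorization q * log q ≤ log n := by
  rw [log_nat_eq_sum_factorization, Finsupp.sum]
  calc ∑ q ∈ Q, n.factorization q * log q
      ≤ ∑ q ∈ Q ∪ n.factorization.support, n.factorization q * log q :=
        sum_le_sum_of_subset_of_nonneg subset_union_left fun q _ _ ↦ by positivity
    _ = ∑ q ∈ n.factorization.support, n.factorization q * log q :=
        (sum_subset subset_union_right fun q _ hq ↦ by simp [Finsupp.notMem_support_iff.1 hq]).symm

lemma sum_sum_ite_pow_dvd_le_log {Q : Finset ℕ} (hQ : ∀ q ∈ Q, q.Prime) {n : ℕ} (hn : n ≠ 0)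
    (K : ℕ) : ∑ q ∈ Q, ∑ k ∈ Ioc 0 K, (if q ^ k ∣ n then log q else 0) ≤ log n := by
  calc ∑ q ∈ Q, ∑ k ∈ Ioc 0 K, (if q ^ k ∣ n then log q else 0)
      = ∑ q ∈ Q, (#{k ∈ Ioc 0 K | q ^ k ∣ n} : ℝ) * log q := by
        simp only [← sum_filter, sum_const, nsmul_eq_mul]
    _ ≤ ∑ q ∈ Q, n.factorization q * log q := by
        gcongr with q hq
        exact card_filter_pow_dvd_le_factorization (hQ q hq) hn K
    _ ≤ log n := sum_factorization_mul_log_le_log Q n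

lemma sum_sum_log_mul_factoredCount_div_le {s Q : Finset ℕ} (hQ : ∀ q ∈ Q, q.Prime) (hQs : Q ⊆ s)
    (K N : ℕ) :
    ∑ q ∈ Q, ∑ k ∈ Ioc 0 K, log q * factoredCount s (N / q ^ k) ≤ log N * factoredCount s N := by
  set S := {n ∈ Icc 1 N | n ∈ Nat.factoredNumbers s}
  have hpow : ∀ q ∈ Q, ∀ k ∈ Ioc 0 K, q ^ k ∈ Nat.factoredNumbers s := fun q hq k hk ↦
    Nat.mem_factoredNumbers_of_primeFactors_subset (pow_ne_zero _ (hQ q hq).ne_zero) <| by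
      rw [Nat.primeFactors_pow _ (mem_Ioc.1 hk).1.ne', (hQ q hq).primeFactors]
      exact singleton_subset_iff.2 (hQs hq)
  calc ∑ q ∈ Q, ∑ k ∈ Ioc 0 K, log q * factoredCount s (N / q ^ k)
      ≤ ∑ q ∈ Q, ∑ k ∈ Ioc 0 K, log q * #{n ∈ S | q ^ k ∣ n} := by
        gcongr with q hq k hk
        rw [filter_filter]
        exact factoredCount_div_le (hpow q hq k hk) N
    _ = ∑ q ∈ Q, ∑ n ∈ S, ∑ k ∈ Ioc 0 K, (if q ^ k ∣ n then log q else 0) := by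
        simp only [card_filter, Nat.cast_sum, mul_sum, mul_ite, Nat.cast_ite, mul_one, mul_zero,
          Nat.cast_one, Nat.cast_zero]
        exact sum_congr rfl fun _ _ ↦ sum_comm
    _ = ∑ n ∈ S, ∑ q ∈ Q, ∑ k ∈ Ioc 0 K, (if q ^ k ∣ n then log q else 0) := sum_comm
    _ ≤ ∑ n ∈ S, log N := by
        refine sum_le_sum fun n hn ↦ ?_
        simp only [S, mem_filter, mem_Icc] at hn
        exact (sum_sum_ite_pow_dvd_le_log hQ (by omega) K).trans
          (log_le_log (by exact_mod_cast hn.1.1) (by exact_mod_cast hn.1.2))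
    _ = log N * factoredCount s N := by rw [sum_const, nsmul_eq_mul, mul_comm]; rfl

lemma ordCompl_mem_factoredNumbers {p n : ℕ} {s : Finset ℕ}
    (hn : n ∈ Nat.factoredNumbers (insert p s)) :
    n / p ^ n.factorization p ∈ Nat.factoredNumbers s := by
  refine Nat.mem_factoredNumbers'.2 fun r hr hrn ↦ ?_
  have hrp : r ≠ p := by
    rintro rfl
    exact Nat.not_dvd_ordCompl hr hn.1 hrn
  simpa [hrp] using Nat.mem_factoredNumbers'.1 hn r hr (hrn.trans (Nat.ordCompl_dvd n p))

lemma factoredCount_insert_le (p : ℕ) (s : Finset ℕ) (N : ℕ) :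
    factoredCount (insert p s) N ≤ ∑ k ∈ Icc 0 N, factoredCount s (N / p ^ k) := by
  let T (k : ℕ) := {m ∈ Icc 1 (N / p ^ k) | m ∈ Nat.factoredNumbers s}
  calc factoredCount (insert p s) N ≤ #((Icc 0 N).biUnion fun k ↦ (T k).image (p ^ k * ·)) := by
        refine card_le_card fun n hn ↦ ?_
        simp only [mem_filter, mem_Icc] at hn
        obtain ⟨⟨hn1, hnN⟩, hns⟩ := hn
        have hn0 : n ≠ 0 := by omega
        simp only [mem_biUnion, mem_Icc, zero_le, true_and, mem_image, T, mem_filter]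
        refine ⟨n.factorization p, by have := Nat.factorization_lt p hn0; omega,
          n / p ^ n.factorization p, ⟨⟨Nat.ordCompl_pos p hn0, ?_⟩,
            ordCompl_mem_factoredNumbers hns⟩, Nat.ordProj_mul_ordCompl_eq_self n p⟩
        exact Nat.div_le_div_right hnN
    _ ≤ ∑ k ∈ Icc 0 N, #((T k).image (p ^ k * ·)) := card_biUnion_le
    _ ≤ ∑ k ∈ Icc 0 N, factoredCount s (N / p ^ k) := sum_le_sum fun k _ ↦ card_image_le

lemma factoredCount_insert_le_mul {p : ℕ} {s Q : Finset ℕ}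
    (hQ : ∀ q ∈ Q, q.Prime) (hQs : Q ⊆ s) (hQp : ∀ q ∈ Q, q ≤ p) (hw : 0 < ∑ q ∈ Q, log q)
    (N : ℕ) :
    (factoredCount (insert p s) N : ℝ) ≤ (1 + log N / ∑ q ∈ Q, log q) * factoredCount s N := by
  set w := ∑ q ∈ Q, log q
  have hsplit : (factoredCount (insert p s) N : ℝ) ≤
      factoredCount s N + ∑ k ∈ Ioc 0 N, (factoredCount s (N / p ^ k) : ℝ) := by
    have := factoredCount_insert_le p s N
    rw [← add_sum_Ioc_eq_sum_Icc (Nat.zero_le N), pow_zero, Nat.div_one] at this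
    exact_mod_cast this
  set T := ∑ k ∈ Ioc 0 N, (factoredCount s (N / p ^ k) : ℝ)
  have hT : w * T ≤ log N * factoredCount s N :=
    calc w * T = ∑ q ∈ Q, ∑ k ∈ Ioc 0 N, log q * factoredCount s (N / p ^ k) := by
          rw [sum_mul_sum]
      _ ≤ ∑ q ∈ Q, ∑ k ∈ Ioc 0 N, log q * factoredCount s (N / q ^ k) := by
          gcongr with q hq k
          exact factoredCount_mono <| Nat.div_le_div_left (Nat.pow_le_pow_left (hQp q hq) k)
            (pow_pos (hQ q hq).pos k)
      _ ≤ log N * factoredCount s N := sum_sum_log_mul_factoredCount_div_le hQ hQs N N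
  calc (factoredCount (insert p s) N : ℝ) ≤ factoredCount s N + T := hsplit
    _ ≤ factoredCount s N + log N * factoredCount s N / w := by
        gcongr
        rw [le_div_iff₀ hw, mul_comm]
        exact hT
    _ = (1 + log N / w) * factoredCount s N := by ring

lemma factoredCount_union_le_pow_mul {s Q F : Finset ℕ} (hQ : ∀ q ∈ Q, q.Prime) (hQs : Q ⊆ s)
    (hF : ∀ p ∈ F, ∀ q ∈ Q, q ≤ p) (hw : 0 < ∑ q ∈ Q, log q) (N : ℕ) :
    (factoredCount (F ∪ s) N : ℝ) ≤
      (1 + log N / ∑ q ∈ Q, log q) ^ #F * factoredCount s N := by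
  induction F using Finset.induction_on with
  | empty => simp
  | insert p F hpF ih =>
    rw [insert_union, card_insert_of_notMem hpF, pow_succ, mul_comm _ (1 + _), mul_assoc]
    refine (factoredCount_insert_le_mul hQ (hQs.trans subset_union_right)
      (hF p (mem_insert_self p F)) hw N).trans ?_
    gcongr
    exact ih fun r hr ↦ hF r (mem_insert_of_mem hr)

lemma smoothCount_eq_factoredCount (x : ℝ) {y : ℝ} (hy : 0 ≤ y) :
    smoothCount x y = factoredCount (Nat.primesLE ⌊y⌋₊) ⌊x⌋₊ := by
  refine congrArg card (filter_congr fun n _ ↦ ?_)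
  simp only [Nat.mem_factoredNumbers', Nat.mem_primesLE, Nat.le_floor_iff hy]
  grind

lemma card_primesLE_sdiff_le {y z : ℝ} (hy : 0 ≤ y) (hyz : y ≤ z) :
    (#(Nat.primesLE ⌊z⌋₊ \ Nat.primesLE ⌊y⌋₊) : ℝ) ≤ z - y + 1 := by
  have hsub : Nat.primesLE ⌊z⌋₊ \ Nat.primesLE ⌊y⌋₊ ⊆ Ioc ⌊y⌋₊ ⌊z⌋₊ := fun p hp ↦ by
    simp only [Finset.mem_sdiff, Nat.mem_primesLE, mem_Ioc] at hp ⊢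
    grind
  calc (#(Nat.primesLE ⌊z⌋₊ \ Nat.primesLE ⌊y⌋₊) : ℝ) ≤ ((⌊z⌋₊ - ⌊y⌋₊ : ℕ) : ℝ) := by
        exact_mod_cast (card_le_card hsub).trans_eq (Nat.card_Ioc _ _)
    _ = ⌊z⌋₊ - ⌊y⌋₊ := Nat.cast_sub (Nat.floor_le_floor hyz)
    _ ≤ z - y + 1 := by linarith [Nat.floor_le (hy.trans hyz), Nat.lt_floor_add_one y]

theorem smoothCount_le_exp_mul_smoothCount {x y z : ℝ} (hx : 1 ≤ x) (hy : 2 ≤ y) (hyz : y ≤ z) :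
    (smoothCount x z : ℝ) ≤ exp ((z - y + 1) * log x / θ y) * smoothCount x y := by
  set s := Nat.primesLE ⌊y⌋₊
  set F := Nat.primesLE ⌊z⌋₊ \ s
  have hθ : 0 < θ y := theta_pos hy
  have hFs : F ∪ s = Nat.primesLE ⌊z⌋₊ :=
    sdiff_union_of_subset (Nat.primesLE_mono (Nat.floor_le_floor hyz))
  have hF : ∀ p ∈ F, ∀ q ∈ s, q ≤ p := fun p hp ↦ by
    simp only [F, s, Finset.mem_sdiff, Nat.mem_primesLE] at hp ⊢
    grind
  have hN : (1 : ℝ) ≤ ⌊x⌋₊ := by exact_mod_cast Nat.le_floor (by exact_mod_cast hx)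
  have key := factoredCount_union_le_pow_mul (fun q hq ↦ Nat.prime_of_mem_primesLE hq)
    subset_rfl hF (by rwa [← theta_eq_sum_primesLE]) ⌊x⌋₊
  rw [hFs, ← theta_eq_sum_primesLE, ← smoothCount_eq_factoredCount x (by linarith),
    ← smoothCount_eq_factoredCount x (by linarith)] at key
  refine key.trans (mul_le_mul_of_nonneg_right ?_ (Nat.cast_nonneg _))
  calc (1 + log ⌊x⌋₊ / θ y) ^ #F ≤ exp (log ⌊x⌋₊ / θ y) ^ #F := by
        gcongr
        linarith [add_one_le_exp (log ⌊x⌋₊ / θ y)]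
    _ = exp (#F * (log ⌊x⌋₊ / θ y)) := (exp_nat_mul _ _).symm
    _ ≤ exp ((z - y + 1) * log x / θ y) := by
        rw [mul_div_assoc]
        gcongr
        · exact card_primesLE_sdiff_le (by linarith) hyz
        · exact Nat.floor_le (by linarith)

lemma eventually_half_log_two_mul_le_theta : ∀ᶠ y in atTop, log 2 / 2 * y ≤ θ y := by
  have hc : 0 < log 2 / 10 := by positivity
  filter_upwards [(isLittleO_log_rpow_atTop one_half_pos).bound hc, eventually_ge_atTop 2]
    with y hlog hy
  rw [norm_of_nonneg (log_nonneg (by linarith)), norm_of_nonneg (by positivity),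
    ← sqrt_eq_rpow] at hlog
  have hsqrt : 1 ≤ √y := one_le_sqrt.2 (by linarith)
  have hlog2 : log 2 ≤ √y * log y :=
    (log_le_log two_pos hy).trans (le_mul_of_one_le_left (log_nonneg (by linarith)) hsqrt)
  have hlog_add : log (y + 2) ≤ 2 * (√y * log y) := by
    calc log (y + 2) ≤ log (y ^ 2) := log_le_log (by linarith) (by nlinarith)
      _ = 2 * log y := by rw [log_pow]; norm_num
      _ ≤ 2 * (√y * log y) := by
          gcongr
          exact le_mul_of_one_le_left (log_nonneg (by linarith)) hsqrt
  calc log 2 / 2 * y = y * log 2 - 5 * (√y * (log 2 / 10 * √y)) := by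
        linear_combination (log 2 / 2) * mul_self_sqrt (by linarith : 0 ≤ y)
    _ ≤ y * log 2 - 5 * (√y * log y) := by gcongr
    _ ≤ (y - 1) * log 2 - log (y + 2) - 2 * √y * log y := by linarith
    _ ≤ θ y := theta_ge' (by linarith)

/-- **Local stability of `Ψ(x,y)` in the `y`-aspect (Smooth Numbers Result 2).**
There is an absolute `C > 0` such that for all sufficiently large `x` and all
`log x ≤ y ≤ x`, one has `Ψ(x, y(1 + 1/log x)) ≤ C Ψ(x,y)`. -/
theorem smoothCount_y_stability :
    ∃ C : ℝ, 0 < C ∧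
      ∃ x₀ : ℝ, ∀ x y : ℝ,
        x₀ ≤ x → Real.log x ≤ y → y ≤ x →
        (smoothCount x (y * (1 + 1 / Real.log x)) : ℝ) ≤ C * (smoothCount x y : ℝ) := by
  obtain ⟨y₀, hy₀⟩ := eventually_atTop.1 eventually_half_log_two_mul_le_theta
  refine ⟨exp (4 / log 2), exp_pos _, exp (max y₀ 2), fun x y hx hLy _ ↦ ?_⟩
  set L := log x
  have hL : max y₀ 2 ≤ L := (le_log_iff_exp_le ((exp_pos _).trans_le hx)).2 hx
  have hL0 : 0 < L := by linarith [le_max_right y₀ 2]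
  have hy : 2 ≤ y := by linarith [le_max_right y₀ 2]
  have hθ : log 2 / 2 * y ≤ θ y := hy₀ y (by linarith [le_max_left y₀ 2])
  have hθ0 : 0 < θ y := theta_pos hy
  have hexponent : (y * (1 + 1 / L) - y + 1) * L / θ y ≤ 4 / log 2 := by
    have hyL : (y * (1 + 1 / L) - y + 1) * L = y + L := by field_simp; ring
    rw [div_le_div_iff₀ hθ0 (log_pos one_lt_two), hyL]
    nlinarith [mul_le_mul_of_nonneg_right hLy (log_nonneg one_le_two)]
  calc (smoothCount x (y * (1 + 1 / L)) : ℝ)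
      ≤ exp ((y * (1 + 1 / L) - y + 1) * L / θ y) * smoothCount x y :=
        smoothCount_le_exp_mul_smoothCount (by linarith) hy
          (le_mul_of_one_le_right (by linarith) (le_add_of_nonneg_right (by positivity)))
    _ ≤ exp (4 / log 2) * smoothCount x y := by gcongr
end

section
/- Let χ be a Dirichlet character to modulus q and χ₀ the principal character mod q. Then for every y ≥ 2, every α with 0 < α ≤ 1, and every real t: |∏_{p ≤ y} (1 − χ(p)·p^{−α−it})^{−1}| ≤ ( ∏_{p ≤ y} (1 − χ₀(p)·p^{−α})^{−1} ) · exp( − ∑_{p ≤ y, p ∤ q} (1 − Re(χ(p)·p^{−it}))/p^α ). -/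
/-!
The inequality holds factor by factor. For `p ∣ q` both Euler factors are `1` and the prime does
not enter the sum. For `p ∤ q` write `r = p^{-α} ∈ (0, 1)` and `w = χ(p) p^{-it}`, a complex number
of modulus `1`, so that with `u = 1 - Re w ∈ [0, 2]` the claim reads `(1 - r) e^{ru} ≤ |1 - rw|`.
Since `|1 - rw| ≥ Re(1 - rw) = 1 - r + ru`, it suffices that `(1 - r) e^{ru} ≤ 1 - r + ru`. By
convexity of `u ↦ e^{ru}` this reduces to `u = 2`, i.e. `2r ≤ log(1 + r) - log(1 - r)`, the first
term of the power series of the right-hand side.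
-/

open scoped Classical

open Real

lemma one_sub_mul_exp_two_mul_le {r : ℝ} (hr0 : 0 ≤ r) (hr1 : r < 1) :
    (1 - r) * exp (2 * r) ≤ 1 + r := by
  have h_log : 2 * r ≤ log (1 + r) - log (1 - r) := by
    have h := le_hasSum (hasSum_log_sub_log_of_abs_lt_one (abs_lt.2 ⟨by linarith, hr1⟩)) 0
      fun _ _ => by positivity
    simpa using h
  have h_exp : exp (2 * r) ≤ (1 + r) / (1 - r) := by
    calc exp (2 * r) ≤ exp (log (1 + r) - log (1 - r)) := exp_le_exp.2 h_log
      _ = (1 + r) / (1 - r) := by rw [exp_sub, exp_log (by linarith), exp_log (by linarith)]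
  have h_pos : 0 < 1 - r := by linarith
  calc (1 - r) * exp (2 * r) ≤ (1 - r) * ((1 + r) / (1 - r)) := by gcongr
    _ = 1 + r := by field_simp

lemma one_sub_mul_exp_mul_le {r u : ℝ} (hr0 : 0 ≤ r) (hr1 : r < 1) (hu0 : 0 ≤ u) (hu2 : u ≤ 2) :
    (1 - r) * exp (r * u) ≤ 1 - r + r * u := by
  have h_conv : exp (r * u) ≤ u / 2 * exp (2 * r) + (1 - u / 2) := by
    have h := convexOn_exp.2 (Set.mem_univ (2 * r)) (Set.mem_univ 0)
      (by linarith : 0 ≤ u / 2) (by linarith : 0 ≤ 1 - u / 2) (by ring)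
    simp only [smul_eq_mul, mul_zero, add_zero, exp_zero, mul_one] at h
    rwa [show u / 2 * (2 * r) = r * u by ring] at h
  have h_end := one_sub_mul_exp_two_mul_le hr0 hr1
  have h_pos : 0 ≤ 1 - r := by linarith
  calc (1 - r) * exp (r * u) ≤ (1 - r) * (u / 2 * exp (2 * r) + (1 - u / 2)) := by gcongr
    _ = u / 2 * ((1 - r) * exp (2 * r)) + (1 - u / 2) * (1 - r) := by ring
    _ ≤ u / 2 * (1 + r) + (1 - u / 2) * (1 - r) := by gcongr
    _ = 1 - r + r * u := by ring

lemma norm_inv_one_sub_ofReal_mul_le {r : ℝ} {w : ℂ} (hr0 : 0 ≤ r) (hr1 : r < 1) (hw : ‖w‖ ≤ 1) :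
    ‖(1 - r * w)⁻¹‖ ≤ (1 - r)⁻¹ * exp (-(r * (1 - w.re))) := by
  have h_re := abs_le.1 ((Complex.abs_re_le_norm w).trans hw)
  have h_lower : (1 - r) * exp (r * (1 - w.re)) ≤ ‖1 - r * w‖ :=
    calc (1 - r) * exp (r * (1 - w.re)) ≤ 1 - r + r * (1 - w.re) :=
          one_sub_mul_exp_mul_le hr0 hr1 (by linarith) (by linarith)
      _ = (1 - r * w).re := by
        simp only [Complex.sub_re, Complex.one_re, Complex.re_ofReal_mul]; ring
      _ ≤ ‖1 - r * w‖ := Complex.re_le_norm _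
  rw [exp_neg, ← mul_inv, norm_inv]
  exact inv_anti₀ (mul_pos (by linarith) (exp_pos _)) h_lower

lemma DirichletCharacter.norm_inv_one_sub_mul_cpow_le {q : ℕ} (χ : DirichletCharacter ℂ q)
    {p : ℕ} (hp : p.Prime) (hpq : ¬ p ∣ q) {α : ℝ} (hα : 0 < α) (t : ℝ) :
    ‖(1 - χ p * (p : ℂ) ^ (-(α : ℂ) - t * Complex.I))⁻¹‖ ≤
      ‖(1 - (1 : DirichletCharacter ℂ q) p * (p : ℂ) ^ (-(α : ℂ)))⁻¹‖ *
        exp (-((1 - (χ p * (p : ℂ) ^ (-(t : ℂ) * Complex.I)).re) / (p : ℝ) ^ α)) := by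
  have hp0 : (0 : ℝ) < p := mod_cast hp.pos
  set r : ℝ := (p : ℝ) ^ (-α)
  set w : ℂ := χ p * (p : ℂ) ^ (-(t : ℂ) * Complex.I)
  have hr0 : 0 ≤ r := by positivity
  have hr1 : r < 1 := rpow_lt_one_of_one_lt_of_neg (mod_cast hp.one_lt) (by linarith)
  have h_cpow : (p : ℂ) ^ (-(α : ℂ)) = r := by
    rw [Complex.ofReal_cpow hp0.le, Complex.ofReal_natCast, Complex.ofReal_neg]
  have h_split : χ p * (p : ℂ) ^ (-(α : ℂ) - t * Complex.I) = r * w := by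
    rw [sub_eq_add_neg, Complex.cpow_add _ _ (mod_cast hp.ne_zero), h_cpow, ← neg_mul]
    ring
  have hw : ‖w‖ ≤ 1 := by
    rw [norm_mul, Complex.norm_natCast_cpow_of_pos hp.pos]
    simpa using χ.norm_le_one p
  have h_principal : (1 : DirichletCharacter ℂ q) p = 1 :=
    MulChar.one_apply ((ZMod.isUnit_prime_iff_not_dvd hp).2 hpq)
  have h_weight : (1 - w.re) / (p : ℝ) ^ α = r * (1 - w.re) := by
    rw [div_eq_mul_inv, mul_comm, ← rpow_neg hp0.le]
  have h_norm : ‖(1 - (r : ℂ))⁻¹‖ = (1 - r)⁻¹ := by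
    rw [norm_inv, ← Complex.ofReal_one, ← Complex.ofReal_sub, Complex.norm_real, norm_eq_abs,
      abs_of_pos (by linarith)]
  rw [h_split, h_principal, one_mul, h_cpow, h_weight, h_norm]
  exact norm_inv_one_sub_ofReal_mul_le hr0 hr1 hw

theorem euler_product_comparison_general (q : ℕ) (χ : DirichletCharacter ℂ q) (y α t : ℝ)
    (hα0 : 0 < α) :
    ‖∏ p ∈ (Finset.Icc 1 ⌊y⌋₊).filter Nat.Prime,
        (1 - χ p * (p : ℂ) ^ (-(α : ℂ) - (t : ℂ) * Complex.I))⁻¹‖ ≤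
      ‖∏ p ∈ (Finset.Icc 1 ⌊y⌋₊).filter Nat.Prime,
          (1 - (1 : DirichletCharacter ℂ q) p * (p : ℂ) ^ (-(α : ℂ)))⁻¹‖ *
        Real.exp (-∑ p ∈ ((Finset.Icc 1 ⌊y⌋₊).filter Nat.Prime).filter (fun p => ¬ p ∣ q),
          (1 - (χ p * (p : ℂ) ^ (-(t : ℂ) * Complex.I)).re) / (p : ℝ) ^ α) := by
  rw [Finset.sum_filter, norm_prod, norm_prod, ← Finset.sum_neg_distrib, exp_sum,
    ← Finset.prod_mul_distrib]
  refine Finset.prod_le_prod (fun _ _ => norm_nonneg _) fun p hp => ?_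
  have hp : p.Prime := (Finset.mem_filter.1 hp).2
  by_cases hpq : p ∣ q
  · have h_nonunit : ¬ IsUnit (p : ZMod q) := by rwa [ZMod.isUnit_prime_iff_not_dvd hp, not_not]
    simp [hpq, χ.map_nonunit h_nonunit, MulChar.map_nonunit _ h_nonunit]
  · simpa [hpq] using χ.norm_inv_one_sub_mul_cpow_le hp hpq hα0 t

/-- **Soundararajan-style Euler product comparison (used in §3.3 of the paper).**
For any Dirichlet character `χ` mod `q` (with `χ₀` the principal character mod `q`),
`y ≥ 2`, `0 < α ≤ 1` and real `t`:
`|∏_{p ≤ y}(1 − χ(p)p^{−α−it})^{−1}|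
  ≤ (∏_{p ≤ y}(1 − χ₀(p)p^{−α})^{−1}) · exp(−∑_{p ≤ y, p ∤ q}(1 − Re(χ(p)p^{−it}))/p^α)`. -/
theorem euler_product_comparison (q : ℕ) (χ : DirichletCharacter ℂ q) (y α t : ℝ)
    (hy : 2 ≤ y) (hα0 : 0 < α) (hα1 : α ≤ 1) :
    ‖∏ p ∈ (Finset.Icc 1 ⌊y⌋₊).filter Nat.Prime,
        (1 - χ p * (p : ℂ) ^ (-(α : ℂ) - (t : ℂ) * Complex.I))⁻¹‖ ≤
      ‖∏ p ∈ (Finset.Icc 1 ⌊y⌋₊).filter Nat.Prime,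
          (1 - (1 : DirichletCharacter ℂ q) p * (p : ℂ) ^ (-(α : ℂ)))⁻¹‖ *
        Real.exp (-∑ p ∈ ((Finset.Icc 1 ⌊y⌋₊).filter Nat.Prime).filter (fun p => ¬ p ∣ q),
          (1 - (χ p * (p : ℂ) ^ (-(t : ℂ) * Complex.I)).re) / (p : ℝ) ^ α) :=
  euler_product_comparison_general q χ y α t hα0
end
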